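/- Let α > 1, 0 < β < 1, and M > 1 be real numbers. Then the two-dimensional Lebesgue measure of the set { (x, y) ∈ (0,1) × (0,1) : β·y / (α·x + y)² > M } equals β² / (6·α·M²). -/

import Mathlib

/-!
Writing `c = β / M`, the condition `β y / (α x + y)² > M` says `α x + y < √(c y)`, which forces
`y < c ≤ 1` and `α x + y < 1`, so the constraints `x, y < 1` are automatic. The region is
therefore the set under the graph of `x = (√(c y) - y) / α` over `0 < y < c`, whose area is
`(2c²/3 - c²/2) / α = c² / (6α)`.
-/

open Set MeasureTheory

def parabolicRegion (a c : ℝ) : Set (ℝ × ℝ) :=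
  {p : ℝ × ℝ | 0 < p.1 ∧ 0 < p.2 ∧ (a * p.1 + p.2) ^ 2 < c * p.2}

theorem integral_sqrt_mul_sub_id {c : ℝ} (hc : 0 ≤ c) :
    ∫ y in (0 : ℝ)..c, (√(c * y) - y) = c ^ 2 / 6 := by
  have hsqrt : ∫ y in (0 : ℝ)..c, √y = 2 / 3 * c ^ ((3 : ℝ) / 2) := by
    simp_rw [Real.sqrt_eq_rpow]
    rw [integral_rpow (Or.inl (by norm_num)), Real.zero_rpow (by norm_num)]
    norm_num
    ring
  have hc32 : √c * c ^ ((3 : ℝ) / 2) = c ^ 2 := by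
    rw [Real.sqrt_eq_rpow, ← Real.rpow_add' hc (by norm_num)]
    norm_num
  simp_rw [Real.sqrt_mul hc]
  rw [intervalIntegral.integral_sub, intervalIntegral.integral_const_mul, hsqrt, integral_id]
  · linear_combination 2 / 3 * hc32
  · exact (continuous_const.mul Real.continuous_sqrt).intervalIntegrable 0 c
  · exact continuous_id.intervalIntegrable 0 c

theorem parabolicRegion_eq_preimage_swap_regionBetween {a c : ℝ} (ha : 0 < a) :
    parabolicRegion a c =
      Prod.swap ⁻¹' regionBetween (fun _ => 0) (fun y => (√(c * y) - y) / a) (Ioo 0 c) := by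
  ext ⟨x, y⟩
  simp only [parabolicRegion, regionBetween, mem_preimage, Prod.swap_prod_mk, mem_ofPred_eq,
    mem_Ioo, lt_div_iff₀ ha]
  constructor
  · rintro ⟨hx, hy, h⟩
    have hlt : a * x + y < √(c * y) := (Real.lt_sqrt (by positivity)).2 h
    have hyc : y ^ 2 < c * y := (Real.lt_sqrt hy.le).1 (by nlinarith)
    exact ⟨⟨hy, by nlinarith⟩, hx, by linarith⟩
  · rintro ⟨⟨hy, -⟩, hx, h⟩
    exact ⟨hx, hy, (Real.lt_sqrt (by positivity)).1 (by linarith)⟩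

theorem volume_parabolicRegion {a c : ℝ} (ha : 0 < a) (hc : 0 ≤ c) :
    volume (parabolicRegion a c) = ENNReal.ofReal (c ^ 2 / (6 * a)) := by
  have hg : Continuous fun y => (√(c * y) - y) / a := by fun_prop
  have hg_nonneg : ∀ y ∈ Ioo 0 c, (0 : ℝ) ≤ (√(c * y) - y) / a := by
    rintro y ⟨hy, hyc⟩
    have : y ≤ √(c * y) := Real.le_sqrt_of_sq_le (by nlinarith)
    exact div_nonneg (sub_nonneg.2 this) ha.le
  have hswap : MeasurePreserving Prod.swap (volume : Measure (ℝ × ℝ)) volume :=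
    Measure.measurePreserving_swap
  rw [parabolicRegion_eq_preimage_swap_regionBetween ha, hswap.measure_preimage
    (measurableSet_regionBetween measurable_const hg.measurable
      measurableSet_Ioo).nullMeasurableSet,
    Measure.volume_eq_prod, volume_regionBetween_eq_integral integrableOn_zero
    (hg.integrableOn_Icc.mono_set Ioo_subset_Icc_self) measurableSet_Ioo hg_nonneg,
    integral_Ioc_eq_integral_Ioo.symm, ← intervalIntegral.integral_of_le hc]
  simp only [Pi.sub_apply, sub_zero]
  rw [intervalIntegral.integral_div, integral_sqrt_mul_sub_id hc]
  congr 1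
  field_simp

theorem sensitiveRegion_eq_parabolicRegion {α β M : ℝ} (hα : 1 ≤ α) (hM : 0 < M)
    (hβM : β ≤ M) :
    {p : ℝ × ℝ | p.1 ∈ Ioo (0 : ℝ) 1 ∧ p.2 ∈ Ioo (0 : ℝ) 1 ∧
        β * p.2 / (α * p.1 + p.2) ^ 2 > M} =
      parabolicRegion α (β / M) := by
  have key {x y : ℝ} (hx : 0 < x) (hy : 0 < y) :
      β * y / (α * x + y) ^ 2 > M ↔ (α * x + y) ^ 2 < β / M * y := by
    rw [gt_iff_lt, lt_div_iff₀ (by positivity), div_mul_eq_mul_div, lt_div_iff₀ hM, mul_comm]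
  ext ⟨x, y⟩
  simp only [parabolicRegion, mem_ofPred_eq, mem_Ioo]
  constructor
  · rintro ⟨⟨hx, -⟩, ⟨hy, -⟩, h⟩
    exact ⟨hx, hy, (key hx hy).1 h⟩
  · rintro ⟨hx, hy, h⟩
    have hlt_y : (α * x + y) ^ 2 < y :=
      h.trans_le (mul_le_of_le_one_left hy.le ((div_le_one hM).2 hβM))
    have hy_le : y ^ 2 ≤ (α * x + y) ^ 2 := pow_le_pow_left₀ hy.le (by nlinarith) 2
    have hy1 : y < 1 := by nlinarith
    have hsum : α * x + y < 1 := by nlinarith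
    exact ⟨⟨hx, by nlinarith⟩, ⟨hy, hy1⟩, (key hx hy).2 h⟩

theorem stmt_14 (α β M : ℝ) (hα : 1 < α) (hβ0 : 0 < β) (hβ1 : β < 1) (hM : 1 < M) :
    volume {p : ℝ × ℝ | p.1 ∈ Ioo (0 : ℝ) 1 ∧ p.2 ∈ Ioo (0 : ℝ) 1 ∧
        β * p.2 / (α * p.1 + p.2) ^ 2 > M} =
      ENNReal.ofReal (β ^ 2 / (6 * α * M ^ 2)) := by
  have hM0 : 0 < M := by linarith
  rw [sensitiveRegion_eq_parabolicRegion hα.le hM0 (by linarith),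
    volume_parabolicRegion (by linarith) (by positivity)]
  congr 1
  field_simp
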